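/- arXiv:1302.6727 — 2 statements merged into one kernel-verified Lean document; each statement's English description precedes it below -/
import Mathlib

section
/- Let $G$ be a graph and suppose events $A$ and $B$ on the product probability space $\{open, closed\}^V$ with i.i.d. Bernoulli($p$) vertices satisfy the disjoint-occurrence relation. Then the probability of the disjoint occurrence $A \square B$ is at most $\mathbb{P}_p(A)\,\mathbb{P}_p(B)$. -/
/-!
Take two independent configurations `ω, ω'` and, for a set `K` of vertices, ask that `A` occur
in `ω` and `B` occur in the hybrid configuration that reads `ω'` on `K` and `ω` off `K`, on
disjoint witness sets. For `K = ∅` this is the event `A □ B`; for `K = V` it forces `ω ∈ A` and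
`ω' ∈ B`, an event of probability `P(A) P(B)`. Adding a vertex `v` to `K` does not decrease the
probability: exchanging the values of `ω` and `ω'` at `v` preserves the product measure, and after
symmetrising under this exchange the inequality holds pointwise, because `A` and `B` are
increasing and `v` lies in at most one of the two witness sets.
-/

open MeasureTheory Function
open scoped ENNReal Classical

namespace BK

variable {V : Type*} {A B : Set (V → Bool)} {I : Set V} {ω ω' : V → Bool} {v : V} {a b : Bool}

def Witnesses (A : Set (V → Bool)) (I : Set V) (ω : V → Bool) : Prop :=
  ∀ σ : V → Bool, (∀ u ∈ I, σ u = ω u) → σ ∈ A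

def OccurDisjointly (A B : Set (V → Bool)) (ω ω' : V → Bool) : Prop :=
  ∃ I J : Set V, Disjoint I J ∧ Witnesses A I ω ∧ Witnesses B J ω'

namespace Witnesses

lemma mem (h : Witnesses A I ω) : ω ∈ A := h ω fun _ _ => rfl

lemma congr (h : Witnesses A I ω) (hω : ∀ u ∈ I, ω' u = ω u) : Witnesses A I ω' :=
  fun σ hσ => h σ fun u hu => (hσ u hu).trans (hω u hu)

lemma update (h : Witnesses A I (update ω v b)) (hv : v ∉ I) (b' : Bool) :
    Witnesses A I (Function.update ω v b') :=
  h.congr fun u hu => by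
    rw [update_of_ne (ne_of_mem_of_not_mem hu hv), update_of_ne (ne_of_mem_of_not_mem hu hv)]

/-- The configuration `σ ⊓ ω` agrees with `ω` on `I` and lies below `σ`. -/
lemma mono (hA : IsUpperSet A) (h : Witnesses A I ω) (hle : ω ≤ ω') : Witnesses A I ω' :=
  fun σ hσ => hA inf_le_left <| h (σ ⊓ ω) fun u hu => by
    simp only [Pi.inf_apply, hσ u hu, inf_eq_right.2 (hle u)]

end Witnesses

namespace OccurDisjointly

lemma mem (h : OccurDisjointly A B ω ω') : ω ∈ A ∧ ω' ∈ B :=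
  let ⟨_, _, _, hI, hJ⟩ := h; ⟨hI.mem, hJ.mem⟩

lemma mono (hA : IsUpperSet A) (hB : IsUpperSet B) {η η' : V → Bool}
    (h : OccurDisjointly A B ω ω') (hω : ω ≤ η) (hω' : ω' ≤ η') : OccurDisjointly A B η η' :=
  let ⟨I, J, hIJ, hI, hJ⟩ := h; ⟨I, J, hIJ, hI.mono hA hω, hJ.mono hB hω'⟩

lemma update_or (h : OccurDisjointly A B (update ω v a) (update ω' v b)) (a' b' : Bool) :
    OccurDisjointly A B (update ω v a) (update ω' v b') ∨
      OccurDisjointly A B (update ω v a') (update ω' v b) := by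
  obtain ⟨I, J, hIJ, hI, hJ⟩ := h
  by_cases hvJ : v ∈ J
  · exact .inr ⟨I, J, hIJ, hI.update (Set.disjoint_right.1 hIJ hvJ) a', hJ⟩
  · exact .inl ⟨I, J, hIJ, hI, hJ.update hvJ b'⟩

end OccurDisjointly

lemma ite_add_ite_le_of_exchange {D : Bool → Bool → Prop}
    (hmono : ∀ x y x' y', x ≤ x' → y ≤ y' → D x y → D x' y')
    (hsplit : ∀ x y x' y', D x y → D x y' ∨ D x' y) (a b : Bool) (c : ℝ≥0∞) :
    (if D a a then c else 0) + (if D b b then c else 0) ≤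
      (if D a b then c else 0) + (if D b a then c else 0) := by
  have h01 := hmono false false false true le_rfl (Bool.false_le _)
  have h10 := hmono false false true false (Bool.false_le _) le_rfl
  have h11 := hmono false false true true (Bool.false_le _) (Bool.false_le _)
  have hs := hsplit true true false false
  cases a <;> cases b <;> split_ifs <;> simp_all

lemma piecewise_update_update {K : Finset V} (hv : v ∉ K) (f g : V → Bool) (a b : Bool) :
    K.piecewise (update f v a) (update g v b) = update (K.piecewise f g) v b := by
  ext u
  by_cases hu : u = v
  · subst hu; simp [hv]
  · by_cases huK : u ∈ K <;> simp [hu, huK]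

noncomputable def swapAt (v : V) (x : (V → Bool) × (V → Bool)) : (V → Bool) × (V → Bool) :=
  (update x.1 v (x.2 v), update x.2 v (x.1 v))

lemma swapAt_involutive (v : V) : Involutive (swapAt v) := fun x => by
  ext u <;> by_cases hu : u = v <;> simp [swapAt, hu]

lemma measure_eq_sum_ite {α : Type*} [Fintype α] [MeasurableSpace α] [MeasurableSingletonClass α]
    (ν : Measure α) (S : Set α) : ν S = ∑ x, if x ∈ S then ν {x} else 0 := by
  rw [← Finset.sum_filter, sum_measure_singleton, Finset.coe_filter_univ]
  rfl

variable [Fintype V] (μ : V → Measure Bool)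

lemma pi_singleton_mul_pi_singleton_swapAt [∀ v, SigmaFinite (μ v)] (v : V)
    (x : (V → Bool) × (V → Bool)) :
    Measure.pi μ {(swapAt v x).1} * Measure.pi μ {(swapAt v x).2} =
      Measure.pi μ {x.1} * Measure.pi μ {x.2} := by
  simp only [Measure.pi_singleton, ← Finset.prod_mul_distrib]
  refine Finset.prod_congr rfl fun u _ => ?_
  by_cases hu : u = v
  · subst hu; simp [swapAt, mul_comm]
  · simp [swapAt, hu]

noncomputable def splitTerm (A B : Set (V → Bool)) (K : Finset V) (x : (V → Bool) × (V → Bool)) :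
    ℝ≥0∞ :=
  if OccurDisjointly A B x.1 (K.piecewise x.2 x.1) then
    Measure.pi μ {x.1} * Measure.pi μ {x.2} else 0

/-- With `D a b` the disjoint occurrence in `x.1` and in the hybrid configuration with their values
at `v` set to `a` and `b`, the two sides are `D a a + D b b` and `D a b + D b a`, where
`a = x.1 v` and `b = x.2 v`. -/
lemma splitTerm_add_splitTerm_swapAt_le [∀ v, SigmaFinite (μ v)] (hA : IsUpperSet A)
    (hB : IsUpperSet B) {K : Finset V} (hv : v ∉ K) (x : (V → Bool) × (V → Bool)) :
    splitTerm μ A B K x + splitTerm μ A B K (swapAt v x) ≤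
      splitTerm μ A B (insert v K) x + splitTerm μ A B (insert v K) (swapAt v x) := by
  obtain ⟨ω, ω'⟩ := x
  have hupdate : update (K.piecewise ω' ω) v (ω v) = K.piecewise ω' ω := by
    rw [← K.piecewise_eq_of_notMem ω' ω hv, update_eq_self]
  have key := ite_add_ite_le_of_exchange
    (D := fun a b => OccurDisjointly A B (update ω v a) (update (K.piecewise ω' ω) v b))
    (fun _ _ _ _ ha hb h => h.mono hA hB (update_mono ha) (update_mono hb))
    (fun _ _ x' y' h => h.update_or x' y') (ω v) (ω' v)
    (Measure.pi μ {ω} * Measure.pi μ {ω'})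
  simp only [update_eq_self, hupdate] at key
  unfold splitTerm
  rw [pi_singleton_mul_pi_singleton_swapAt]
  simpa [swapAt, piecewise_update_update hv, Finset.piecewise_insert, hupdate] using key

noncomputable def splitSum (A B : Set (V → Bool)) (K : Finset V) : ℝ≥0∞ :=
  ∑ x, splitTerm μ A B K x

lemma splitSum_empty (A B : Set (V → Bool)) :
    splitSum μ A B ∅ = Measure.pi μ {ω | OccurDisjointly A B ω ω} * Measure.pi μ Set.univ := by
  rw [measure_eq_sum_ite _ {ω | _}, measure_eq_sum_ite _ Set.univ, Finset.sum_mul_sum]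
  simp only [splitSum, splitTerm, Finset.piecewise_empty, Fintype.sum_prod_type, Set.mem_univ,
    if_true, ite_mul, zero_mul]
  rfl

lemma splitSum_univ_le (A B : Set (V → Bool)) :
    splitSum μ A B Finset.univ ≤ Measure.pi μ A * Measure.pi μ B := by
  rw [measure_eq_sum_ite _ A, measure_eq_sum_ite _ B, Finset.sum_mul_sum]
  simp only [splitSum, splitTerm, Finset.piecewise_univ, Fintype.sum_prod_type]
  gcongr with ω _ ω' _
  by_cases h : OccurDisjointly A B ω ω'
  · simp [h, h.mem]
  · simp [h]

lemma splitSum_le_splitSum_insert [∀ v, SigmaFinite (μ v)] (hA : IsUpperSet A)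
    (hB : IsUpperSet B) {K : Finset V} (hv : v ∉ K) :
    splitSum μ A B K ≤ splitSum μ A B (insert v K) := by
  -- `swapAt v` is an involution preserving the weights, so each sum may be symmetrised under it.
  have hdouble : ∀ K, splitSum μ A B K + splitSum μ A B K =
      ∑ x, (splitTerm μ A B K x + splitTerm μ A B K (swapAt v x)) := fun K => by
    rw [Finset.sum_add_distrib, (swapAt_involutive v).bijective.sum_comp]; rfl
  rw [← ENNReal.mul_le_mul_iff_right two_ne_zero ENNReal.ofNat_ne_top, two_mul, two_mul,
    hdouble, hdouble]
  exact Finset.sum_le_sum fun x _ => splitTerm_add_splitTerm_swapAt_le μ hA hB hv x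

lemma splitSum_empty_le [∀ v, SigmaFinite (μ v)] (hA : IsUpperSet A) (hB : IsUpperSet B)
    (K : Finset V) : splitSum μ A B ∅ ≤ splitSum μ A B K := by
  induction K using Finset.induction_on with
  | empty => exact le_rfl
  | insert v K hv ih => exact ih.trans (splitSum_le_splitSum_insert μ hA hB hv)

theorem pi_occurDisjointly_mul_pi_univ_le [∀ v, SigmaFinite (μ v)] (hA : IsUpperSet A)
    (hB : IsUpperSet B) :
    Measure.pi μ {ω | OccurDisjointly A B ω ω} * Measure.pi μ Set.univ ≤
      Measure.pi μ A * Measure.pi μ B := by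
  rw [← splitSum_empty]
  exact (splitSum_empty_le μ hA hB Finset.univ).trans (splitSum_univ_le μ A B)

theorem pi_occurDisjointly_le [∀ v, IsProbabilityMeasure (μ v)] (hA : IsUpperSet A)
    (hB : IsUpperSet B) :
    Measure.pi μ {ω | OccurDisjointly A B ω ω} ≤ Measure.pi μ A * Measure.pi μ B := by
  simpa using pi_occurDisjointly_mul_pi_univ_le μ hA hB

end BK

/-- The van den Berg–Kesten (BK) inequality for increasing events in Bernoulli site
percolation: the probability of the disjoint occurrence `A □ B` is at most
`P_p(A) * P_p(B)`. Configurations are elements of `{open, closed}^V ≃ V → Bool`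
(`true` = open), and the measure is the product of Bernoulli(p) measures. -/
theorem bk_inequality {V : Type*} [Fintype V] (p : ENNReal) (hp : p ≤ 1)
    (A B : Set (V → Bool))
    (hAinc : ∀ ω ∈ A, ∀ ω' : V → Bool, ω ≤ ω' → ω' ∈ A)
    (hBinc : ∀ ω ∈ B, ∀ ω' : V → Bool, ω ≤ ω' → ω' ∈ B) :
    (Measure.pi fun _ : V => (PMF.bernoulli p.toNNReal (by simpa using ENNReal.toNNReal_mono ENNReal.one_ne_top hp)).toMeasure)
        {ω : V → Bool | ∃ I J : Set V, Disjoint I J ∧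
          (∀ ω' : V → Bool, (∀ v ∈ I, ω' v = ω v) → ω' ∈ A) ∧
          (∀ ω' : V → Bool, (∀ v ∈ J, ω' v = ω v) → ω' ∈ B)} ≤
      (Measure.pi fun _ : V => (PMF.bernoulli p.toNNReal (by simpa using ENNReal.toNNReal_mono ENNReal.one_ne_top hp)).toMeasure) A *
        (Measure.pi fun _ : V => (PMF.bernoulli p.toNNReal (by simpa using ENNReal.toNNReal_mono ENNReal.one_ne_top hp)).toMeasure) B :=
  BK.pi_occurDisjointly_le _
    (fun _ _ hle h => hAinc _ h _ hle) (fun _ _ hle h => hBinc _ h _ hle)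
end

section
/- Let $u, v, w$ be vertices of the triangular lattice with $v \prec u$, $v \prec u'$ along a shortest path, and $u \sim u'$. Let $\sigma(v,u)$ denote the triangular-grid approximation of the straight line segment from $v$ to $u$ (the sequence of hexagon centers whose hexagons the segment crosses). Then for every vertex $w \in \sigma(v,u)$ there is a vertex $w' \in \sigma(v,u')$ with $w \sim w'$ or $w = w'$. -/
noncomputable section

/-- Vertices of the triangular lattice, in coordinates w.r.t. the basis
`e₁ = (1,0)`, `e₂ = (cos(π/3), sin(π/3))`. -/
abbrev Vtx := ℤ × ℤ

/-- The planar embedding `a e₁ + b e₂`. -/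
def emb (v : Vtx) : ℝ × ℝ :=
  ((v.1 : ℝ) + (v.2 : ℝ) / 2, (v.2 : ℝ) * (Real.sqrt 3 / 2))

/-- Squared Euclidean distance in the plane. -/
def sqDist (x y : ℝ × ℝ) : ℝ := (x.1 - y.1) ^ 2 + (x.2 - y.2) ^ 2

/-- Adjacency in the triangular lattice: Euclidean distance `1`. -/
def AdjE (u v : Vtx) : Prop := sqDist (emb u) (emb v) = 1

/-- The (closed) regular hexagon of side `1/√3` centred at the lattice vertex `v`
with a vertical side: it is the Voronoi cell of `v` in the triangular lattice. -/
def Hex (v : Vtx) : Set (ℝ × ℝ) :=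
  {x | ∀ w : Vtx, sqDist x (emb v) ≤ sqDist x (emb w)}

/-!
Translation by `-w` and rotation by `π/3` preserve the lattice, adjacency and the hexagons, so
it suffices to treat `w = 0` and `u' - u = (1, 0)`. If `x = (1 - t) v + t u` lies in `Hex 0`,
the point `(1 - t) v + t u'` of `s(v, u')` is `x + t (1, 0)`. In the coordinates `2⟨x, e⟩`,
`e = e₁, e₂, e₁ - e₂`, every hexagon is an intersection of three strips of width one, and a
linear case check shows that the slid point lies in the hexagon of `0`, of `(1, 0)`, or of one
of their two common neighbours `(0, 1)`, `(1, -1)`.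
-/

namespace TriangularLattice

lemma sqrt_three_sq : Real.sqrt 3 ^ 2 = 3 := Real.sq_sqrt (by norm_num)

lemma mul_add_mul_le_of_abs_le {A B p q : ℝ} (hp : |p| ≤ 1) (hq : |q| ≤ 1)
    (hpq : |p - q| ≤ 1) : A * p + B * q ≤ (|A| + |B| + |A + B|) / 2 := by
  rw [abs_le] at hp hq hpq
  rcases le_total 0 A with hA | hA <;> rcases le_total 0 B with hB | hB <;>
    rcases le_total 0 (A + B) with hAB | hAB <;>
    simp only [abs_of_nonneg, abs_of_nonpos, hA, hB, hAB] <;> nlinarith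

lemma intCast_abs_le_sq (n : ℤ) : (|n| : ℝ) ≤ (n : ℝ) ^ 2 := by
  exact_mod_cast (sq_abs n ▸ Int.le_self_sq |n|)

lemma int_mul_add_mul_le {p q : ℝ} (hp : |p| ≤ 1) (hq : |q| ≤ 1) (hpq : |p - q| ≤ 1) (a b : ℤ) :
    a * p + b * q ≤ (a : ℝ) ^ 2 + a * b + b ^ 2 := by
  have hab := intCast_abs_le_sq (a + b)
  push_cast at hab
  linarith [mul_add_mul_le_of_abs_le (A := a) (B := b) hp hq hpq, intCast_abs_le_sq a,
    intCast_abs_le_sq b]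

lemma emb_sub (p q : Vtx) : emb (p - q) = emb p - emb q := by
  ext <;> simp only [emb, Prod.fst_sub, Prod.snd_sub, Int.cast_sub] <;> ring

lemma sqDist_sub_sub (x y c : ℝ × ℝ) : sqDist (x - c) (y - c) = sqDist x y := by
  simp only [sqDist, Prod.fst_sub, Prod.snd_sub]; ring

lemma sqDist_emb (u v : Vtx) :
    sqDist (emb u) (emb v) = ((u.1 - v.1) ^ 2 + (u.1 - v.1) * (u.2 - v.2) + (u.2 - v.2) ^ 2 : ℤ) := by
  simp only [sqDist, emb]
  push_cast
  linear_combination ((u.2 - v.2 : ℝ) ^ 2 / 4) * sqrt_three_sq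

lemma adjE_iff {u v : Vtx} :
    AdjE u v ↔ (u.1 - v.1) ^ 2 + (u.1 - v.1) * (u.2 - v.2) + (u.2 - v.2) ^ 2 = 1 := by
  rw [AdjE, sqDist_emb]; exact_mod_cast Iff.rfl

lemma mem_hex_sub_iff {x : ℝ × ℝ} {w : Vtx} (c : Vtx) : x - emb c ∈ Hex (w - c) ↔ x ∈ Hex w := by
  simp only [Hex, Set.mem_ofPred_eq]
  rw [(Equiv.subRight c).surjective.forall]
  simp only [Equiv.subRight_apply, emb_sub, sqDist_sub_sub]

lemma sqDist_sub_sqDist_zero (x : ℝ × ℝ) (a b : ℤ) :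
    sqDist x (emb (a, b)) - sqDist x (emb 0) =
      (a : ℝ) ^ 2 + a * b + b ^ 2 - (a * (2 * x.1) + b * (x.1 + Real.sqrt 3 * x.2)) := by
  simp only [sqDist, emb, Prod.fst_zero, Prod.snd_zero]
  push_cast
  linear_combination ((b : ℝ) ^ 2 / 4) * sqrt_three_sq

/-- The six neighbours of `0` already cut out `Hex 0`, by `int_mul_add_mul_le`. -/
lemma mem_hex_zero_iff {x : ℝ × ℝ} :
    x ∈ Hex 0 ↔ |2 * x.1| ≤ 1 ∧ |x.1 + Real.sqrt 3 * x.2| ≤ 1 ∧ |x.1 - Real.sqrt 3 * x.2| ≤ 1 := by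
  constructor
  · intro hx
    have h (a b : ℤ) : a * (2 * x.1) + b * (x.1 + Real.sqrt 3 * x.2) ≤ (a : ℝ) ^ 2 + a * b + b ^ 2 := by
      linarith [hx (a, b), sqDist_sub_sqDist_zero x a b]
    have := h 1 0; have := h (-1) 0; have := h 0 1; have := h 0 (-1)
    have := h 1 (-1); have := h (-1) 1
    push_cast at *
    simp only [abs_le]
    refine ⟨⟨?_, ?_⟩, ⟨?_, ?_⟩, ⟨?_, ?_⟩⟩ <;> linarith
  · rintro ⟨hp, hq, hr⟩ ⟨a, b⟩
    have hpq : |2 * x.1 - (x.1 + Real.sqrt 3 * x.2)| ≤ 1 := by ring_nf at hr ⊢; exact hr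
    linarith [sqDist_sub_sqDist_zero x a b, int_mul_add_mul_le hp hq hpq a b]

lemma mem_hex_iff {x : ℝ × ℝ} {c : Vtx} :
    x ∈ Hex c ↔ |2 * x.1 - (2 * c.1 + c.2)| ≤ 1 ∧
      |x.1 + Real.sqrt 3 * x.2 - (c.1 + 2 * c.2)| ≤ 1 ∧
      |x.1 - Real.sqrt 3 * x.2 - (c.1 - c.2)| ≤ 1 := by
  have e₁ : 2 * (x - emb c).1 = 2 * x.1 - (2 * c.1 + c.2) := by
    simp only [emb, Prod.fst_sub]; ring
  have e₂ : (x - emb c).1 + Real.sqrt 3 * (x - emb c).2 =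
      x.1 + Real.sqrt 3 * x.2 - (c.1 + 2 * c.2) := by
    simp only [emb, Prod.fst_sub, Prod.snd_sub]
    linear_combination (-(c.2 : ℝ) / 2) * sqrt_three_sq
  have e₃ : (x - emb c).1 - Real.sqrt 3 * (x - emb c).2 =
      x.1 - Real.sqrt 3 * x.2 - (c.1 - c.2) := by
    simp only [emb, Prod.fst_sub, Prod.snd_sub]
    linear_combination ((c.2 : ℝ) / 2) * sqrt_three_sq
  rw [← mem_hex_sub_iff c, sub_self, mem_hex_zero_iff, e₁, e₂, e₃]

/-- Rotation by `π/3` in lattice coordinates; `rotPlane` is the same rotation of the plane. -/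
def rot (p : Vtx) : Vtx := (-p.2, p.1 + p.2)

def rotPlane : ℝ × ℝ →ₗ[ℝ] ℝ × ℝ where
  toFun q := (q.1 / 2 - q.2 * (Real.sqrt 3 / 2), q.1 * (Real.sqrt 3 / 2) + q.2 / 2)
  map_add' x y := by ext <;> simp only [Prod.fst_add, Prod.snd_add] <;> ring
  map_smul' r x := by ext <;> simp only [Prod.smul_fst, Prod.smul_snd, smul_eq_mul,
    RingHom.id_apply] <;> ring

lemma rot_surjective : Function.Surjective rot :=
  fun p => ⟨(p.1 + p.2, -p.1), by simp [rot]⟩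

lemma rotPlane_surjective : Function.Surjective rotPlane := fun y => by
  refine ⟨(y.1 / 2 + y.2 * (Real.sqrt 3 / 2), -(y.1 * (Real.sqrt 3 / 2)) + y.2 / 2), ?_⟩
  ext <;> simp only [rotPlane, LinearMap.coe_mk, AddHom.coe_mk]
  · linear_combination (y.1 / 4) * sqrt_three_sq
  · linear_combination (y.2 / 4) * sqrt_three_sq

lemma emb_rot (p : Vtx) : emb (rot p) = rotPlane (emb p) := by
  ext <;> simp only [emb, rot, rotPlane, LinearMap.coe_mk, AddHom.coe_mk] <;> push_cast
  · linear_combination ((p.2 : ℝ) / 4) * sqrt_three_sq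
  · ring

lemma sqDist_rotPlane (x y : ℝ × ℝ) : sqDist (rotPlane x) (rotPlane y) = sqDist x y := by
  simp only [sqDist, rotPlane, LinearMap.coe_mk, AddHom.coe_mk]
  linear_combination (((x.1 - y.1) ^ 2 + (x.2 - y.2) ^ 2) / 4) * sqrt_three_sq

lemma rotPlane_mem_hex_rot_iff {x : ℝ × ℝ} {w : Vtx} : rotPlane x ∈ Hex (rot w) ↔ x ∈ Hex w := by
  simp only [Hex, Set.mem_ofPred_eq]
  rw [rot_surjective.forall]
  simp only [emb_rot, sqDist_rotPlane]

lemma adjE_rot_iff {u v : Vtx} : AdjE (rot u) (rot v) ↔ AdjE u v := by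
  rw [AdjE, AdjE, emb_rot, emb_rot, sqDist_rotPlane]

lemma rot_zero : rot 0 = 0 := by simp [rot]

def ShiftStable (δ : Vtx) : Prop :=
  ∀ x ∈ Hex 0, ∀ t ∈ Set.Icc (0 : ℝ) 1, ∃ c, x + t • emb δ ∈ Hex c ∧ (c = 0 ∨ AdjE 0 c)

lemma shiftStable_rot {δ : Vtx} (h : ShiftStable δ) : ShiftStable (rot δ) := by
  intro x hx t ht
  obtain ⟨x, rfl⟩ := rotPlane_surjective x
  rw [← rot_zero, rotPlane_mem_hex_rot_iff] at hx
  obtain ⟨c, hc, hc₀⟩ := h x hx t ht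
  refine ⟨rot c, ?_, ?_⟩
  · rwa [emb_rot, ← map_smul, ← map_add, rotPlane_mem_hex_rot_iff]
  · rcases hc₀ with rfl | hc₀
    · exact Or.inl rot_zero
    · exact Or.inr (rot_zero ▸ adjE_rot_iff.2 hc₀)

lemma shiftStable_one_zero : ShiftStable (1, 0) := by
  intro x hx t ⟨ht₀, ht₁⟩
  have hy : x + t • emb (1, 0) = (x.1 + t, x.2) := by ext <;> simp [emb]
  rw [hy]
  rw [mem_hex_zero_iff, abs_le, abs_le, abs_le] at hx
  obtain ⟨⟨hp₁, hp₂⟩, ⟨hq₁, hq₂⟩, ⟨hr₁, hr₂⟩⟩ := hx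
  rcases lt_or_ge (x.1 + Real.sqrt 3 * x.2 + t) 0 with hq | hq
  · rcases le_or_gt (x.1 - Real.sqrt 3 * x.2 + t) 1 with hr | hr
    · exact ⟨0, mem_hex_iff.2 (by simp only [abs_le]; norm_num; and_intros <;> linarith), Or.inl rfl⟩
    · exact ⟨(1, -1), mem_hex_iff.2 (by simp only [abs_le]; norm_num; and_intros <;> linarith),
        Or.inr (by norm_num [adjE_iff])⟩
  rcases lt_or_ge (x.1 - Real.sqrt 3 * x.2 + t) 0 with hr | hr
  · rcases le_or_gt (x.1 + Real.sqrt 3 * x.2 + t) 1 with hq' | hq'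
    · exact ⟨0, mem_hex_iff.2 (by simp only [abs_le]; norm_num; and_intros <;> linarith), Or.inl rfl⟩
    · exact ⟨(0, 1), mem_hex_iff.2 (by simp only [abs_le]; norm_num; and_intros <;> linarith),
        Or.inr (by norm_num [adjE_iff])⟩
  rcases le_or_gt (2 * x.1 + 2 * t) 1 with hp | hp
  · exact ⟨0, mem_hex_iff.2 (by simp only [abs_le]; norm_num; and_intros <;> linarith), Or.inl rfl⟩
  · exact ⟨(1, 0), mem_hex_iff.2 (by simp only [abs_le]; norm_num; and_intros <;> linarith),
        Or.inr (by norm_num [adjE_iff])⟩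

lemma shiftStable_iterate_rot (k : ℕ) : ShiftStable (rot^[k] (1, 0)) := by
  induction k with
  | zero => exact shiftStable_one_zero
  | succ k ih => rw [Function.iterate_succ_apply']; exact shiftStable_rot ih

lemma exists_iterate_rot_eq_of_adjE_zero {δ : Vtx} (h : AdjE 0 δ) :
    ∃ k < 6, rot^[k] (1, 0) = δ := by
  obtain ⟨a, b⟩ := δ
  rw [adjE_iff] at h
  norm_num at h
  have ha : -1 ≤ a ∧ a ≤ 1 := by constructor <;> nlinarith [sq_nonneg (a + 2 * b)]
  have hb : -1 ≤ b ∧ b ≤ 1 := by constructor <;> nlinarith [sq_nonneg (2 * a + b)]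
  obtain ⟨ha₁, ha₂⟩ := ha
  obtain ⟨hb₁, hb₂⟩ := hb
  interval_cases a <;> interval_cases b <;> revert h <;> decide

lemma adjE_sub_right_iff {u v w : Vtx} : AdjE (u - w) (v - w) ↔ AdjE u v := by
  simp only [adjE_iff, Prod.fst_sub, Prod.snd_sub, sub_sub_sub_cancel_right]

lemma exists_mem_hex_add_smul_emb {x : ℝ × ℝ} {w δ : Vtx} (hx : x ∈ Hex w) (hδ : AdjE 0 δ)
    {t : ℝ} (ht : t ∈ Set.Icc (0 : ℝ) 1) :
    ∃ c, x + t • emb δ ∈ Hex c ∧ (c = w ∨ AdjE w c) := by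
  obtain ⟨k, -, rfl⟩ := exists_iterate_rot_eq_of_adjE_zero hδ
  rw [← mem_hex_sub_iff w, sub_self] at hx
  obtain ⟨c, hc, hc₀⟩ := shiftStable_iterate_rot k _ hx t ht
  refine ⟨c + w, ?_, ?_⟩
  · rwa [← mem_hex_sub_iff w, add_sub_cancel_right, ← sub_add_eq_add_sub]
  · rcases hc₀ with rfl | hc₀
    · exact Or.inl (zero_add w)
    · rw [← adjE_sub_right_iff (w := w), sub_self, add_sub_cancel_right]
      exact Or.inr hc₀

end TriangularLattice

/-- Membership of `w` in the grid approximation `σ(v,u)` is expressed as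
`Hex w ∩ s(v,u) ≠ ∅`. -/
theorem grid_approximation_stable_general
    (v u u' : Vtx)
    (hadj : AdjE u u')
    (w : Vtx) (hw : (Hex w ∩ segment ℝ (emb v) (emb u)).Nonempty) :
    ∃ w' : Vtx, (Hex w' ∩ segment ℝ (emb v) (emb u')).Nonempty ∧
      (w' = w ∨ AdjE w w') := by
  obtain ⟨x, hxw, a, b, ha, hb, hab, rfl⟩ := hw
  have hδ : AdjE 0 (u' - u) := by rwa [← sub_self u, TriangularLattice.adjE_sub_right_iff]
  obtain ⟨c, hc, hcw⟩ :=
    TriangularLattice.exists_mem_hex_add_smul_emb hxw hδ ⟨hb, by linarith⟩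
  refine ⟨c, ⟨_, hc, a, b, ha, hb, hab, ?_⟩, hcw⟩
  rw [TriangularLattice.emb_sub, smul_sub]
  abel

/-- Stability of the grid approximation of segments: if `v ≺ u, u'` along a path
and `u ∼ u'`, then every hexagon met by the segment `s(v,u)` is equal or adjacent
to some hexagon met by the segment `s(v,u')`. Membership of `w` in the grid
approximation `σ(v,u)` is expressed as `Hex w ∩ s(v,u) ≠ ∅`. -/
theorem grid_approximation_stable
    (n : ℕ) (ρ : ℕ → Vtx)
    (hinj : ∀ i < n, ∀ j < n, ρ i = ρ j → i = j)
    (hadjpath : ∀ i, i + 1 < n → AdjE (ρ i) (ρ (i + 1)))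
    (v u u' : Vtx) (iv iu iu' : ℕ)
    (hiv : iv < n) (hiu : iu < n) (hiu' : iu' < n)
    (hv : ρ iv = v) (hu : ρ iu = u) (hu' : ρ iu' = u')
    (hord : iv ≤ iu ∧ iv ≤ iu')
    (hadj : AdjE u u')
    (w : Vtx) (hw : (Hex w ∩ segment ℝ (emb v) (emb u)).Nonempty) :
    ∃ w' : Vtx, (Hex w' ∩ segment ℝ (emb v) (emb u')).Nonempty ∧
      (w' = w ∨ AdjE w w') :=
  grid_approximation_stable_general v u u' hadj w hw
end
end
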